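/- arXiv:0909.3443 — 4 statements merged into one kernel-verified Lean document; each statement's English description precedes it below -/
import Mathlib

section
/- Let w : ℝⁿ → ℝ be a C² convex function, x₀ ∈ ℝⁿ, r > 0, c > 0 and δ > 0. Suppose that det(D²w(x)) ≥ c for all x in the closed ball B̄(x₀, r), and that w(x) ≤ w(x₀) + δ for all x ∈ B̄(x₀, r). Then r² ≤ 2δ · c^{-1/n}. -/
/-!
For `0 < a` with `aⁿ < c`, compare `w` with the paraboloid `a/2 ‖x - x₀‖²`. If `a r² > 2δ`,
then `a/2 ‖x - x₀‖² - w` is larger on the sphere `‖x - x₀‖ = r` than at `x₀`, so it has a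
local minimum `x` inside the ball. There the Hessian of `w` lies between `0` (convexity) and
`a • 1`, so `det D²w(x) ≤ aⁿ < c`, which is impossible. Hence `a r² ≤ 2δ` for every
`a < c^{1/n}`, and letting `a → c^{1/n}` gives the bound.
-/

open Set Metric Filter Topology InnerProductSpace

theorem IsLocalMin.nonneg_of_hasDerivAt_of_hasDerivAt {g g' : ℝ → ℝ} {g'' t : ℝ}
    (hmin : IsLocalMin g t) (hg : ∀ s, HasDerivAt g (g' s) s) (hg' : HasDerivAt g' g'' t) :
    0 ≤ g'' := by
  have hderiv : deriv g = g' := funext fun s => (hg s).deriv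
  -- if `g'' < 0`, the second derivative test makes `t` a local maximum as well, so `g` is
  -- locally constant and `g'' = 0`
  by_contra! hneg
  have hmax : IsLocalMax g t := isLocalMax_of_deriv_deriv_neg
    (by rwa [hderiv, hg'.deriv]) hmin.deriv_eq_zero (hg t).continuousAt
  have hconst : g =ᶠ[𝓝 t] fun _ => g t := (hmax.and hmin).mono fun s hs => hs.1.antisymm hs.2
  have hflat : g' =ᶠ[𝓝 t] fun _ => 0 := by simpa [hderiv] using hconst.deriv
  exact hneg.ne ((hg'.congr_of_eventuallyEq hflat.symm).unique (hasDerivAt_const t 0))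

theorem ConvexOn.nonneg_of_hasDerivAt_of_hasDerivAt {g g' : ℝ → ℝ} {g'' t : ℝ}
    (hconv : ConvexOn ℝ univ g) (hg : ∀ s, HasDerivAt g (g' s) s) (hg' : HasDerivAt g' g'' t) :
    0 ≤ g'' := by
  have hderiv : deriv g = g' := funext fun s => (hg s).deriv
  have hmono : Monotone g' := by
    simpa [hderiv] using hconv.monotoneOn_deriv fun s _ => (hg s).differentiableAt
  exact hg'.deriv ▸ hmono.deriv_nonneg

theorem mul_le_of_forall_lt_mul_le {b k m : ℝ} (hb : 0 < b)
    (h : ∀ a, 0 < a → a < b → a * k ≤ m) : b * k ≤ m := by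
  refine le_of_tendsto
    ((continuous_mul_const k).tendsto b |>.mono_left (nhdsWithin_le_nhds (s := Iio b))) ?_
  filter_upwards [Ioo_mem_nhdsLT hb] with a ha using h a ha.1 ha.2

theorem exists_isLocalMin_mem_ball {X : Type*} [PseudoMetricSpace X] [ProperSpace X]
    {f : X → ℝ} {x₀ : X} {r : ℝ} (hr : 0 ≤ r) (hf : ContinuousOn f (closedBall x₀ r))
    (hsphere : ∀ y ∈ sphere x₀ r, f x₀ < f y) : ∃ x ∈ ball x₀ r, IsLocalMin f x := by
  obtain ⟨x, hx, hmin⟩ := (isCompact_closedBall x₀ r).exists_isMinOn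
    ⟨x₀, mem_closedBall_self hr⟩ hf
  have hx_ball : x ∈ ball x₀ r := by
    refine lt_of_le_of_ne (mem_closedBall.mp hx) fun hxr => ?_
    exact (hsphere x hxr).not_ge (hmin (mem_closedBall_self hr))
  exact ⟨x, hx_ball, hmin.isLocalMin (closedBall_mem_nhds_of_mem hx_ball)⟩

theorem LinearMap.IsSymmetric.det_le_pow {E : Type*} [NormedAddCommGroup E]
    [InnerProductSpace ℝ E] [FiniteDimensional ℝ E] {T : E →ₗ[ℝ] E} (hT : T.IsSymmetric)
    {a : ℝ} (hnonneg : ∀ v, 0 ≤ ⟪T v, v⟫_ℝ) (hle : ∀ v, ⟪T v, v⟫_ℝ ≤ a * ‖v‖ ^ 2) :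
    T.det ≤ a ^ Module.finrank ℝ E := by
  set b := hT.eigenvectorBasis rfl
  have hrayleigh : ∀ i, ⟪T (b i), b i⟫_ℝ = hT.eigenvalues rfl i := by
    intro i
    rw [hT.apply_eigenvectorBasis, real_inner_smul_left, real_inner_self_eq_norm_sq,
      b.orthonormal.1 i]
    simp
  rw [hT.det_eq_prod_eigenvalues rfl]
  calc ∏ i, (hT.eigenvalues rfl i : ℝ) ≤ ∏ _i : Fin (Module.finrank ℝ E), a := by
        refine Finset.prod_le_prod (fun i _ => ?_) fun i _ => ?_
        · simpa [hrayleigh] using hnonneg (b i)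
        · simpa [hrayleigh, b.orthonormal.1 i] using hle (b i)
    _ = a ^ Module.finrank ℝ E := by simp

section

variable {E : Type*} [NormedAddCommGroup E] [InnerProductSpace ℝ E] [CompleteSpace E]
  {w : E → ℝ} {x : E}

theorem inner_fderiv_gradient_apply (u v : E) :
    ⟪fderiv ℝ (gradient w) x u, v⟫_ℝ = fderiv ℝ (fderiv ℝ w) x u v := by
  have hgrad : gradient w = (toDual ℝ E).symm ∘ fderiv ℝ w := rfl
  rw [hgrad, LinearIsometryEquiv.comp_fderiv]
  exact toDual_symm_apply

theorem ContDiffAt.isSymmetric_fderiv_gradient (hw : ContDiffAt ℝ 2 w x) :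
    (fderiv ℝ (gradient w) x : E →ₗ[ℝ] E).IsSymmetric := by
  intro u v
  simp only [ContinuousLinearMap.coe_coe]
  rw [inner_fderiv_gradient_apply, real_inner_comm, inner_fderiv_gradient_apply,
    hw.isSymmSndFDerivAt (by simp) u v]

theorem ContDiff.differentiable_gradient (hw : ContDiff ℝ 2 w) :
    Differentiable ℝ (gradient w) :=
  ((toDual ℝ E).symm.toContinuousLinearEquiv.differentiable).comp
    ((hw.fderiv_right (m := 1) (by norm_num)).differentiable one_ne_zero)

theorem hasDerivAt_comp_add_smul (hw : Differentiable ℝ w) (h : E) (s : ℝ) :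
    HasDerivAt (fun t : ℝ => w (x + t • h)) ⟪gradient w (x + s • h), h⟫_ℝ s := by
  have hline : HasDerivAt (fun t : ℝ => x + t • h) h s := by
    simpa using ((hasDerivAt_id s).smul_const h).const_add x
  rw [inner_gradient_left]
  exact (hw _).hasFDerivAt.comp_hasDerivAt s hline

theorem hasDerivAt_inner_gradient_comp_add_smul (hgrad : DifferentiableAt ℝ (gradient w) x)
    (h : E) : HasDerivAt (fun t : ℝ => ⟪gradient w (x + t • h), h⟫_ℝ)
      ⟪fderiv ℝ (gradient w) x h, h⟫_ℝ 0 := by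
  have hline : HasDerivAt (fun t : ℝ => x + t • h) h 0 := by
    simpa using ((hasDerivAt_id (0 : ℝ)).smul_const h).const_add x
  have hgrad' : HasFDerivAt (gradient w) (fderiv ℝ (gradient w) x) (x + (0 : ℝ) • h) := by
    simpa using hgrad.hasFDerivAt
  simpa using (hgrad'.comp_hasDerivAt 0 hline).inner ℝ (hasDerivAt_const 0 h)

theorem ConvexOn.inner_fderiv_gradient_self_nonneg (hconv : ConvexOn ℝ univ w)
    (hw : Differentiable ℝ w) (hgrad : DifferentiableAt ℝ (gradient w) x) (h : E) :
    0 ≤ ⟪fderiv ℝ (gradient w) x h, h⟫_ℝ := by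
  have hline : ConvexOn ℝ univ fun t : ℝ => w (x + t • h) := by
    have hcomp : (fun t : ℝ => w (x + t • h)) = w ∘ AffineMap.lineMap x (x + h) := by
      ext t; simp [AffineMap.lineMap_apply_module', add_comm]
    simpa [hcomp] using hconv.comp_affineMap (AffineMap.lineMap x (x + h))
  exact hline.nonneg_of_hasDerivAt_of_hasDerivAt (hasDerivAt_comp_add_smul hw h)
    (hasDerivAt_inner_gradient_comp_add_smul hgrad h)

theorem IsLocalMin.inner_fderiv_gradient_self_le {a : ℝ} {x₀ : E}
    (hmin : IsLocalMin (fun y => a / 2 * ‖y - x₀‖ ^ 2 - w y) x)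
    (hw : Differentiable ℝ w) (hgrad : DifferentiableAt ℝ (gradient w) x) (h : E) :
    ⟪fderiv ℝ (gradient w) x h, h⟫_ℝ ≤ a * ‖h‖ ^ 2 := by
  have hline : ∀ s : ℝ, HasDerivAt (fun t : ℝ => x + t • h - x₀) h s := fun s => by
    simpa using (((hasDerivAt_id s).smul_const h).const_add x).sub_const x₀
  have hmin_line :
      IsLocalMin (fun t : ℝ => a / 2 * ‖x + t • h - x₀‖ ^ 2 - w (x + t • h)) 0 := by
    have hcont : ContinuousAt (fun t : ℝ => x + t • h) 0 := by fun_prop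
    have := IsLocalMin.comp_continuous (g := fun t : ℝ => x + t • h)
      (by simpa using hmin) hcont
    simpa [Function.comp_def] using this
  have hg : ∀ s : ℝ, HasDerivAt (fun t : ℝ => a / 2 * ‖x + t • h - x₀‖ ^ 2 - w (x + t • h))
      (a * ⟪x + s • h - x₀, h⟫_ℝ - ⟪gradient w (x + s • h), h⟫_ℝ) s := fun s => by
    refine ((((hline s).norm_sq).const_mul (a / 2)).sub
      (hasDerivAt_comp_add_smul hw h s)).congr_deriv ?_
    ring
  have hg' :
      HasDerivAt (fun t : ℝ => a * ⟪x + t • h - x₀, h⟫_ℝ - ⟪gradient w (x + t • h), h⟫_ℝ)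
      (a * ‖h‖ ^ 2 - ⟪fderiv ℝ (gradient w) x h, h⟫_ℝ) 0 := by
    refine ((((hline 0).inner ℝ (hasDerivAt_const 0 h)).const_mul a).sub
      (hasDerivAt_inner_gradient_comp_add_smul hgrad h)).congr_deriv ?_
    simp
  linarith [hmin_line.nonneg_of_hasDerivAt_of_hasDerivAt hg hg']

end

section

variable {E : Type*} [NormedAddCommGroup E] [InnerProductSpace ℝ E] [FiniteDimensional ℝ E]
  {w : E → ℝ}

theorem IsLocalMin.det_fderiv_gradient_le_pow {a : ℝ} {x₀ x : E} (hw : ContDiff ℝ 2 w)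
    (hconv : ConvexOn ℝ univ w) (hmin : IsLocalMin (fun y => a / 2 * ‖y - x₀‖ ^ 2 - w y) x) :
    (fderiv ℝ (gradient w) x : E →ₗ[ℝ] E).det ≤ a ^ Module.finrank ℝ E :=
  have hw₁ : Differentiable ℝ w := hw.differentiable two_ne_zero
  have hgrad := hw.differentiable_gradient x
  hw.contDiffAt.isSymmetric_fderiv_gradient.det_le_pow
    (hconv.inner_fderiv_gradient_self_nonneg hw₁ hgrad)
    (hmin.inner_fderiv_gradient_self_le hw₁ hgrad)

theorem ConvexOn.mul_sq_le_of_pow_lt_det (hconv : ConvexOn ℝ univ w) (hw : ContDiff ℝ 2 w)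
    {x₀ : E} {r c δ a : ℝ} (hr : 0 ≤ r)
    (hdet : ∀ x ∈ closedBall x₀ r, c ≤ (fderiv ℝ (gradient w) x : E →ₗ[ℝ] E).det)
    (hbound : ∀ x ∈ closedBall x₀ r, w x ≤ w x₀ + δ) (ha : a ^ Module.finrank ℝ E < c) :
    a * r ^ 2 ≤ 2 * δ := by
  by_contra! hlt
  have hcont : Continuous fun y => a / 2 * ‖y - x₀‖ ^ 2 - w y := by
    have := hw.continuous; fun_prop
  obtain ⟨x, hx, hmin⟩ := exists_isLocalMin_mem_ball hr hcont.continuousOn fun y hy => by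
    have hwy := hbound y (sphere_subset_closedBall hy)
    rw [mem_sphere_iff_norm] at hy
    simp only [sub_self, norm_zero, hy]
    nlinarith
  linarith [hdet x (ball_subset_closedBall hx), hmin.det_fderiv_gradient_le_pow hw hconv]

end

theorem monge_ampere_comparison_radius_bound_general {n : ℕ} (hn : 0 < n)
    (w : EuclideanSpace ℝ (Fin n) → ℝ) (hw : ContDiff ℝ 2 w)
    (hconv : ConvexOn ℝ Set.univ w)
    (x₀ : EuclideanSpace ℝ (Fin n)) (r c δ : ℝ)
    (hr : 0 < r) (hc : 0 < c)
    (hdet : ∀ x ∈ Metric.closedBall x₀ r,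
      c ≤ LinearMap.det (fderiv ℝ (gradient w) x).toLinearMap)
    (hbound : ∀ x ∈ Metric.closedBall x₀ r, w x ≤ w x₀ + δ) :
    r ^ 2 ≤ 2 * δ * c ^ (-1 / (n : ℝ)) := by
  set b := c ^ (n⁻¹ : ℝ)
  have hb : 0 < b := by positivity
  have hbn : b ^ n = c := Real.rpow_inv_natCast_pow hc.le hn.ne'
  have hbr : b * r ^ 2 ≤ 2 * δ := mul_le_of_forall_lt_mul_le hb fun a ha hab =>
    hconv.mul_sq_le_of_pow_lt_det hw hr.le hdet hbound <| by
      rw [finrank_euclideanSpace_fin, ← hbn]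
      exact pow_lt_pow_left₀ hab ha.le hn.ne'
  rw [neg_div, Real.rpow_neg hc.le, one_div, le_mul_inv_iff₀ hb]
  linarith

/-- Let `w` be a `C²` convex function on `ℝⁿ` (`n ≥ 1`), `x₀ ∈ ℝⁿ`,
`r > 0`, `c > 0`, `δ > 0`.  If `det D²w ≥ c` on the closed ball `B̄(x₀, r)` and
`w ≤ w x₀ + δ` on `B̄(x₀, r)`, then `r² ≤ 2δ · c^{-1/n}`.  (Comparison principle for
the real Monge–Ampère operator.) -/
theorem monge_ampere_comparison_radius_bound {n : ℕ} (hn : 0 < n)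
    (w : EuclideanSpace ℝ (Fin n) → ℝ) (hw : ContDiff ℝ 2 w)
    (hconv : ConvexOn ℝ Set.univ w)
    (x₀ : EuclideanSpace ℝ (Fin n)) (r c δ : ℝ)
    (hr : 0 < r) (hc : 0 < c) (hδ : 0 < δ)
    (hdet : ∀ x ∈ Metric.closedBall x₀ r,
      c ≤ LinearMap.det (fderiv ℝ (gradient w) x).toLinearMap)
    (hbound : ∀ x ∈ Metric.closedBall x₀ r, w x ≤ w x₀ + δ) :
    r ^ 2 ≤ 2 * δ * c ^ (-1 / (n : ℝ)) :=
  monge_ampere_comparison_radius_bound_general hn w hw hconv x₀ r c δ hr hc hdet hbound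
end

section
/- Let w : ℝⁿ → ℝ be a convex function attaining its global minimum m = w(x₀) at x₀, and suppose the sublevel set {x : w(x) ≤ m + 1} is contained in the open ball B(x₀, R) for some R > 0. Then for all x ∈ ℝⁿ, w(x) ≥ m - 1 + ‖x - x₀‖ / R. -/
open Set Metric

/-
The point `y` where the segment from `x₀` to `x` leaves the ball `B(x₀, R)` lies outside the
sublevel set, so `w y > m + 1`. Convexity along that segment says the increase of `w` over
`x₀` grows at least linearly in the distance from `x₀`: from `y`, at distance `R`, to `x`, at
distance `‖x - x₀‖`, it is scaled up by `‖x - x₀‖ / R`. Inside the ball, `w ≥ m` suffices.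
-/

theorem ConvexOn.add_mul_dist_div_le {E : Type*} [NormedAddCommGroup E] [NormedSpace ℝ E]
    {s : Set E} {w : E → ℝ} (hw : ConvexOn ℝ s w) {x₀ x : E} (hx₀ : x₀ ∈ s) (hx : x ∈ s)
    {R c : ℝ} (hR : 0 < R) (hRx : R ≤ dist x x₀)
    (hsphere : ∀ y ∈ sphere x₀ R, w x₀ + c ≤ w y) :
    w x₀ + c * (dist x x₀ / R) ≤ w x := by
  set d := dist x x₀
  have hd : 0 < d := hR.trans_le hRx
  set t := R / d
  have ht : 0 < t := div_pos hR hd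
  have ht_le : t ≤ 1 := (div_le_one hd).2 hRx
  have hy_sphere : AffineMap.lineMap x₀ x t ∈ sphere x₀ R := by
    rw [mem_sphere, dist_lineMap_left, Real.norm_of_nonneg ht.le, dist_comm,
      div_mul_cancel₀ _ hd.ne']
  have hy_le : w (AffineMap.lineMap x₀ x t) ≤ (1 - t) * w x₀ + t * w x := by
    rw [AffineMap.lineMap_apply_module]
    exact hw.2 hx₀ hx (by linarith) ht.le (by ring)
  have hc : c ≤ t * (w x - w x₀) := by linarith [hsphere _ hy_sphere]
  have ht_inv : t * (d / R) = 1 := by simp only [t]; field_simp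
  calc w x₀ + c * (d / R) ≤ w x₀ + t * (w x - w x₀) * (d / R) := by
        gcongr
    _ = w x := by rw [mul_right_comm, ht_inv, one_mul, add_sub_cancel]

/-- Let `w` be a convex function on `ℝⁿ` attaining its global minimum
`m = w x₀` at `x₀`, and suppose the sublevel set `{x | w x ≤ m + 1}` is contained in
the open ball `B(x₀, R)` with `R > 0`.  Then `w x ≥ m - 1 + ‖x - x₀‖ / R` for all `x`. -/
theorem convex_linear_growth_of_sublevel_in_ball {n : ℕ}
    (w : EuclideanSpace ℝ (Fin n) → ℝ) (hconv : ConvexOn ℝ Set.univ w)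
    (x₀ : EuclideanSpace ℝ (Fin n)) (hmin : ∀ x, w x₀ ≤ w x)
    (m : ℝ) (hm : m = w x₀)
    (R : ℝ) (hR : 0 < R)
    (hsub : {x | w x ≤ m + 1} ⊆ Metric.ball x₀ R) :
    ∀ x, m - 1 + ‖x - x₀‖ / R ≤ w x := by
  intro x
  subst hm
  rw [← dist_eq_norm]
  rcases le_or_gt (dist x x₀) R with hin | hout
  · have : dist x x₀ / R ≤ 1 := (div_le_one hR).2 hin
    linarith [hmin x]
  · have hsphere : ∀ y ∈ sphere x₀ R, w x₀ + 1 ≤ w y := fun y hy ↦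
      le_of_not_ge fun hy_sub ↦ (hsub hy_sub).ne (mem_sphere.1 hy)
    have := hconv.add_mul_dist_div_le (mem_univ x₀) (mem_univ x) hR hout.le hsphere
    linarith
end

section
/- Let Δ ⊂ ℝⁿ be a compact convex set with nonempty interior containing the origin in its interior, let u₀ : ℝⁿ → ℝ be a smooth convex function with bounded gradient, ∇u₀(ℝⁿ) = int Δ and ∫_{ℝⁿ} e^{-u₀(x)} dx = vol(Δ). Let t ∈ (0,1) and let u : ℝⁿ → ℝ be a smooth function with everywhere positive-definite Hessian, ∇u(ℝⁿ) = int Δ and det(D²u(x)) = e^{-w(x)} for all x, where w := (1-t)u₀ + t·u, and suppose w(x) ≥ κ‖x‖ - C for some κ > 0, C ∈ ℝ. Then (1 / vol(Δ)) · ∫_{ℝⁿ} ∇u₀(x) · e^{-w(x)} dx = -(t/(1-t)) · P_c, where P_c = (∫_Δ y dy)/vol(Δ) is the barycenter of Δ. -/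
/-!
Since `w = (1 - t) u₀ + t u`, we have `∇w = (1 - t) ∇u₀ + t ∇u`, and integration by parts gives
`∫ e^{-w} ∇w = -∫ ∇(e^{-w}) = 0`; everything is integrable because `e^{-w}` decays exponentially
and both gradients take values in the bounded set `Δ`. The Monge–Ampère equation
`det D²u = e^{-w}` makes `∫ e^{-w} ∇u` the change of variables `y = ∇u(x)` in `∫_Δ y dy`:
`∇u` is injective because `D²u` is positive definite, its range is `int Δ`, and the frontier of a
convex set is null. Solving `(1 - t) ∫ e^{-w} ∇u₀ + t ∫_Δ y dy = 0` gives the identity.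
-/

open MeasureTheory Set Module
open scoped RealInnerProductSpace Gradient

lemma one_add_le_max_inv_mul_exp {a s : ℝ} (ha : 0 < a) (hs : 0 ≤ s) :
    1 + s ≤ max 1 a⁻¹ * Real.exp (a * s) := by
  have hc : 1 ≤ max 1 a⁻¹ * a := by
    rw [← inv_mul_cancel₀ ha.ne']
    gcongr
    exact le_max_right _ _
  calc 1 + s ≤ max 1 a⁻¹ * (1 + a * s) := by nlinarith [le_max_left 1 a⁻¹]
    _ ≤ max 1 a⁻¹ * Real.exp (a * s) := by
      gcongr
      linarith [Real.add_one_le_exp (a * s)]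

section Integrability

variable {E : Type*} [NormedAddCommGroup E] [NormedSpace ℝ E] [FiniteDimensional ℝ E]
  [MeasurableSpace E] [BorelSpace E] {μ : Measure E} [μ.IsAddHaarMeasure]

lemma integrable_exp_neg_mul_norm {κ : ℝ} (hκ : 0 < κ) :
    Integrable (fun x : E ↦ Real.exp (-(κ * ‖x‖))) μ := by
  set r : ℝ := finrank ℝ E + 1
  have hr : 0 < r := by positivity
  set c := max 1 (κ / r)⁻¹
  refine ((integrable_one_add_norm (μ := μ) (r := r) (by simp [r])).const_mul (c ^ r)).mono'
    (by fun_prop) (.of_forall fun x ↦ ?_)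
  have hpow : (1 + ‖x‖) ^ r ≤ c ^ r * Real.exp (κ * ‖x‖) :=
    calc (1 + ‖x‖) ^ r ≤ (c * Real.exp (κ / r * ‖x‖)) ^ r := by
          gcongr
          exact one_add_le_max_inv_mul_exp (div_pos hκ hr) (norm_nonneg x)
      _ = c ^ r * Real.exp (κ * ‖x‖) := by
          rw [Real.mul_rpow (by positivity) (by positivity), ← Real.exp_mul]
          field_simp
  rw [Real.norm_of_nonneg (Real.exp_pos _).le, Real.exp_neg, Real.rpow_neg (by positivity),
    ← div_eq_mul_inv, le_div_iff₀ (by positivity), inv_mul_le_iff₀ (Real.exp_pos _), mul_comm]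
  exact hpow

lemma integrable_exp_neg_of_linear_growth {w : E → ℝ} (hw : AEStronglyMeasurable w μ)
    {κ C : ℝ} (hκ : 0 < κ) (hgrowth : ∀ x, κ * ‖x‖ - C ≤ w x) :
    Integrable (fun x ↦ Real.exp (-(w x))) μ :=
  ((integrable_exp_neg_mul_norm hκ).const_mul (Real.exp C)).mono'
    (Real.continuous_exp.comp_aestronglyMeasurable hw.neg) (.of_forall fun x ↦ by
      rw [Real.norm_of_nonneg (Real.exp_pos _).le, ← Real.exp_add]
      exact Real.exp_le_exp.2 (by linarith [hgrowth x]))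

end Integrability

lemma MeasureTheory.Integrable.smul_of_isBounded_range {α F : Type*} [MeasurableSpace α]
    {μ : Measure α} [NormedAddCommGroup F] [NormedSpace ℝ F] {ρ : α → ℝ} {g : α → F}
    (hρ : Integrable ρ μ) (hg : AEStronglyMeasurable g μ) (hbdd : Bornology.IsBounded (range g)) :
    Integrable (fun x ↦ ρ x • g x) μ := by
  obtain ⟨M, hM⟩ := isBounded_iff_forall_norm_le.1 hbdd
  exact hρ.smul_bdd M hg (.of_forall fun x ↦ hM _ (mem_range_self x))

lemma injective_of_inner_fderiv_apply_self_pos {E : Type*} [NormedAddCommGroup E]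
    [InnerProductSpace ℝ E] {F : E → E} (hF : Differentiable ℝ F)
    (hpos : ∀ x h, h ≠ 0 → 0 < ⟪fderiv ℝ F x h, h⟫) : Function.Injective F := by
  intro x y hxy
  by_contra hne
  set c := x - y
  have hder : ∀ s : ℝ, HasDerivAt (fun s : ℝ ↦ ⟪F (y + s • c), c⟫)
      ⟪fderiv ℝ F (y + s • c) c, c⟫ s := fun s ↦ by
    have hline : HasDerivAt (fun s : ℝ ↦ y + s • c) c s := by
      simpa using ((hasDerivAt_id s).smul_const c).const_add y
    exact ((hF _).hasFDerivAt.comp_hasDerivAt s hline).inner ℝ (hasDerivAt_const s c)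
      |>.congr_deriv (by simp)
  have hmono := strictMono_of_hasDerivAt_pos hder fun s ↦ hpos _ c (sub_ne_zero.2 hne)
  simpa [c, hxy] using hmono zero_lt_one

section Gradient

variable {E : Type*} [NormedAddCommGroup E] [InnerProductSpace ℝ E] [CompleteSpace E]
  {f g : E → ℝ} {f' g' x : E}

lemma HasGradientAt.fun_add (hf : HasGradientAt f f' x) (hg : HasGradientAt g g' x) :
    HasGradientAt (fun y ↦ f y + g y) (f' + g') x := by
  rw [hasGradientAt_iff_hasFDerivAt] at *
  simpa using hf.fun_add hg

lemma HasGradientAt.fun_neg (hf : HasGradientAt f f' x) :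
    HasGradientAt (fun y ↦ -f y) (-f') x := by
  rw [hasGradientAt_iff_hasFDerivAt] at *
  simpa using hf.fun_neg

lemma HasGradientAt.const_mul (c : ℝ) (hf : HasGradientAt f f' x) :
    HasGradientAt (fun y ↦ c * f y) (c • f') x := by
  rw [hasGradientAt_iff_hasFDerivAt] at *
  simpa using hf.const_mul c

lemma HasGradientAt.exp (hf : HasGradientAt f f' x) :
    HasGradientAt (fun y ↦ Real.exp (f y)) (Real.exp (f x) • f') x := by
  rw [hasGradientAt_iff_hasFDerivAt] at *
  simpa using hf.exp

lemma ContDiff.gradient {n : WithTop ℕ∞} (hf : ContDiff ℝ (n + 1) f) : ContDiff ℝ n (∇ f) :=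
  (InnerProductSpace.toDual ℝ E).symm.contDiff.comp (hf.fderiv_right le_rfl)

end Gradient

section IntegrationByParts

variable {E F : Type*} [NormedAddCommGroup E] [InnerProductSpace ℝ E] [FiniteDimensional ℝ E]
  [MeasurableSpace E] [BorelSpace E] {μ : Measure E} [μ.IsAddHaarMeasure]
  [NormedAddCommGroup F] [NormedSpace ℝ F]

lemma integral_fderiv_apply_eq_zero {g : E → F} {v : E} (hg : Differentiable ℝ g)
    (hg_int : Integrable g μ) (hg'_int : Integrable (fun x ↦ fderiv ℝ g x v) μ) :
    ∫ x, fderiv ℝ g x v ∂μ = 0 := by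
  simpa using integral_smul_fderiv_eq_neg_fderiv_smul_of_integrable (μ := μ)
    (f := fun _ ↦ (1 : ℝ)) (g := g) (v := v) (by simp) (by simpa using hg'_int)
    (by simpa using hg_int) (fun x _ ↦ differentiableAt_const _) (fun x _ ↦ hg x)

lemma integral_gradient_eq_zero {f : E → ℝ} (hf : Differentiable ℝ f)
    (hf_int : Integrable f μ) (hf'_int : Integrable (∇ f) μ) : ∫ x, ∇ f x ∂μ = 0 := by
  refine ext_inner_left ℝ fun v ↦ ?_
  have hfv : ∀ x, ⟪v, ∇ f x⟫ = fderiv ℝ f x v := fun x ↦ by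
    rw [real_inner_comm, inner_gradient_left]
  rw [← integral_inner hf'_int, inner_zero_right]
  simp_rw [hfv]
  exact integral_fderiv_apply_eq_zero hf hf_int
    (by simpa only [hfv] using hf'_int.const_inner (𝕜 := ℝ) v)

lemma integral_exp_neg_smul_gradient_eq_zero {w : E → ℝ} (hw : Differentiable ℝ w)
    (hρ : Integrable (fun x ↦ Real.exp (-w x)) μ)
    (hρw : Integrable (fun x ↦ Real.exp (-w x) • ∇ w x) μ) :
    ∫ x, Real.exp (-w x) • ∇ w x ∂μ = 0 := by
  have hgrad : ∀ x, HasGradientAt (fun y ↦ Real.exp (-w y)) (-(Real.exp (-w x) • ∇ w x)) x :=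
    fun x ↦ by simpa using (hw x).hasGradientAt.fun_neg.exp
  rw [← neg_eq_zero, ← integral_neg, ← gradient_eq hgrad]
  exact integral_gradient_eq_zero (fun x ↦ (hgrad x).differentiableAt) hρ
    (gradient_eq hgrad ▸ hρw.neg)

end IntegrationByParts

lemma integral_abs_det_fderiv_smul_eq_setIntegral_range {E F : Type*} [NormedAddCommGroup E]
    [NormedSpace ℝ E] [FiniteDimensional ℝ E] [MeasurableSpace E] [BorelSpace E]
    (μ : Measure E) [μ.IsAddHaarMeasure] [NormedAddCommGroup F] [NormedSpace ℝ F]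
    {f : E → E} {f' : E → E →L[ℝ] E} (hf' : ∀ x, HasFDerivAt f (f' x) x)
    (hf : Function.Injective f) (g : E → F) :
    ∫ x, |(f' x).det| • g (f x) ∂μ = ∫ y in range f, g y ∂μ := by
  simpa using (integral_image_eq_integral_abs_det_fderiv_smul μ MeasurableSet.univ
    (fun x _ ↦ (hf' x).hasFDerivWithinAt) hf.injOn g).symm

lemma integral_smul_gradient_eq_setIntegral_of_det_eq {E : Type*} [NormedAddCommGroup E]
    [InnerProductSpace ℝ E] [FiniteDimensional ℝ E] [MeasurableSpace E] [BorelSpace E]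
    (μ : Measure E) [μ.IsAddHaarMeasure] {Δ : Set E} (hΔ : Convex ℝ Δ) {u ρ : E → ℝ}
    (hu : Differentiable ℝ (∇ u)) (hpos : ∀ x h, h ≠ 0 → 0 < ⟪fderiv ℝ (∇ u) x h, h⟫)
    (hrange : range (∇ u) = interior Δ)
    (hdet : ∀ x, LinearMap.det (fderiv ℝ (∇ u) x).toLinearMap = ρ x) (hρ : ∀ x, 0 ≤ ρ x) :
    ∫ x, ρ x • ∇ u x ∂μ = ∫ y in Δ, y ∂μ := by
  rw [← setIntegral_congr_set (interior_ae_eq_of_null_frontier (hΔ.addHaar_frontier μ)),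
    ← hrange, ← integral_abs_det_fderiv_smul_eq_setIntegral_range μ
      (fun x ↦ (hu x).hasFDerivAt) (injective_of_inner_fderiv_apply_self_pos hu hpos)]
  simp [ContinuousLinearMap.det, hdet, abs_of_nonneg (hρ _)]

theorem wang_zhu_key_identity_general {n : ℕ}
    (Δ : Set (EuclideanSpace ℝ (Fin n))) (hΔcpt : IsCompact Δ) (hΔconv : Convex ℝ Δ)
    (u₀ : EuclideanSpace ℝ (Fin n) → ℝ) (hu₀smooth : ContDiff ℝ (⊤ : ℕ∞) u₀)
    (hu₀grad : Set.range (gradient u₀) = interior Δ)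
    (t : ℝ) (ht : t ∈ Set.Ioo (0 : ℝ) 1)
    (u w : EuclideanSpace ℝ (Fin n) → ℝ) (husmooth : ContDiff ℝ (⊤ : ℕ∞) u)
    (hupos : ∀ x h, h ≠ 0 → 0 < ⟪(fderiv ℝ (gradient u) x) h, h⟫)
    (hugrad : Set.range (gradient u) = interior Δ)
    (hwdef : ∀ x, w x = (1 - t) * u₀ x + t * u x)
    (hudet : ∀ x, LinearMap.det (fderiv ℝ (gradient u) x).toLinearMap
        = Real.exp (-(w x)))
    (κ C : ℝ) (hκ : 0 < κ) (hgrowth : ∀ x, κ * ‖x‖ - C ≤ w x) :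
    (volume Δ).toReal⁻¹ • (∫ x, Real.exp (-(w x)) • gradient u₀ x)
      = -(t / (1 - t)) • ((volume Δ).toReal⁻¹ • ∫ y in Δ, y) := by
  have hu₀' : ContDiff ℝ 1 (∇ u₀) := (hu₀smooth.of_le (WithTop.coe_le_coe.2 le_top)).gradient
  have hu' : ContDiff ℝ 1 (∇ u) := (husmooth.of_le (WithTop.coe_le_coe.2 le_top)).gradient
  have hw_grad : ∀ x, HasGradientAt w ((1 - t) • ∇ u₀ x + t • ∇ u x) x := fun x ↦ by
    rw [show w = _ from funext hwdef]
    exact ((hu₀smooth.differentiable (by simp) x).hasGradientAt.const_mul _).fun_add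
      ((husmooth.differentiable (by simp) x).hasGradientAt.const_mul _)
  have hw : Differentiable ℝ w := fun x ↦ (hw_grad x).differentiableAt
  have hρ := integrable_exp_neg_of_linear_growth (μ := volume)
    hw.continuous.aestronglyMeasurable hκ hgrowth
  have hΔbdd : Bornology.IsBounded (interior Δ) := hΔcpt.isBounded.subset interior_subset
  have hA := (hρ.smul_of_isBounded_range hu₀'.continuous.aestronglyMeasurable
    (hu₀grad ▸ hΔbdd)).fun_smul (1 - t)
  have hB := (hρ.smul_of_isBounded_range hu'.continuous.aestronglyMeasurable
    (hugrad ▸ hΔbdd)).fun_smul t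
  have hsplit : (fun x ↦ Real.exp (-w x) • ∇ w x)
      = fun x ↦ (1 - t) • (Real.exp (-w x) • ∇ u₀ x) + t • (Real.exp (-w x) • ∇ u x) := by
    simp_rw [gradient_eq hw_grad, smul_add, smul_comm (Real.exp _)]
  have hsum : (1 - t) • (∫ x, Real.exp (-w x) • ∇ u₀ x) + t • ∫ x, Real.exp (-w x) • ∇ u x
      = 0 := by
    rw [← integral_smul, ← integral_smul, ← integral_add hA hB, ← hsplit]
    exact integral_exp_neg_smul_gradient_eq_zero hw hρ (hsplit ▸ hA.add hB)
  have hcov : ∫ x, Real.exp (-w x) • ∇ u x = ∫ y in Δ, y :=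
    integral_smul_gradient_eq_setIntegral_of_det_eq volume hΔconv
      (hu'.differentiable one_ne_zero) hupos hugrad hudet fun x ↦ (Real.exp_pos _).le
  have hA_eq : ∫ x, Real.exp (-w x) • ∇ u₀ x = -(t / (1 - t)) • ∫ x, Real.exp (-w x) • ∇ u x := by
    rw [neg_smul, div_eq_inv_mul, mul_smul, ← smul_neg, ← eq_neg_of_add_eq_zero_left hsum,
      inv_smul_smul₀ (sub_pos.2 ht.2).ne']
  rw [hA_eq, hcov, smul_comm]

/-- key identity: Let `Δ ⊂ ℝⁿ` be a compact convex set with the origin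
in its interior, `u₀` smooth convex with bounded gradient, `∇u₀(ℝⁿ) = int Δ` and
`∫ e^{-u₀} = vol Δ`.  Let `t ∈ (0,1)` and let `u` be smooth with positive-definite
Hessian, `∇u(ℝⁿ) = int Δ`, `det D²u = e^{-w}` where `w = (1-t)u₀ + t·u`, and suppose
`w x ≥ κ‖x‖ - C` with `κ > 0`.  Then
`(1/vol Δ) ∫ ∇u₀ e^{-w} = -(t/(1-t)) • P_c`, `P_c` the barycenter of `Δ`. -/
theorem wang_zhu_key_identity {n : ℕ}
    (Δ : Set (EuclideanSpace ℝ (Fin n))) (hΔcpt : IsCompact Δ) (hΔconv : Convex ℝ Δ)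
    (hΔ0 : (0 : EuclideanSpace ℝ (Fin n)) ∈ interior Δ)
    (u₀ : EuclideanSpace ℝ (Fin n) → ℝ) (hu₀smooth : ContDiff ℝ (⊤ : ℕ∞) u₀)
    (hu₀conv : ConvexOn ℝ Set.univ u₀)
    (L : ℝ) (hu₀bdd : ∀ x, ‖gradient u₀ x‖ ≤ L)
    (hu₀grad : Set.range (gradient u₀) = interior Δ)
    (hu₀norm : (∫ x, Real.exp (-(u₀ x))) = (volume Δ).toReal)
    (t : ℝ) (ht : t ∈ Set.Ioo (0 : ℝ) 1)
    (u w : EuclideanSpace ℝ (Fin n) → ℝ) (husmooth : ContDiff ℝ (⊤ : ℕ∞) u)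
    (hupos : ∀ x h, h ≠ 0 → 0 < ⟪(fderiv ℝ (gradient u) x) h, h⟫)
    (hugrad : Set.range (gradient u) = interior Δ)
    (hwdef : ∀ x, w x = (1 - t) * u₀ x + t * u x)
    (hudet : ∀ x, LinearMap.det (fderiv ℝ (gradient u) x).toLinearMap
        = Real.exp (-(w x)))
    (κ C : ℝ) (hκ : 0 < κ) (hgrowth : ∀ x, κ * ‖x‖ - C ≤ w x) :
    (volume Δ).toReal⁻¹ • (∫ x, Real.exp (-(w x)) • gradient u₀ x)
      = -(t / (1 - t)) • ((volume Δ).toReal⁻¹ • ∫ y in Δ, y) :=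
  wang_zhu_key_identity_general Δ hΔcpt hΔconv u₀ hu₀smooth hu₀grad t ht u w husmooth hupos hugrad
    hwdef hudet κ C hκ hgrowth
end

section
/- Let p₁, …, p_N be points in ℝⁿ, set M = max_α ‖p_α‖, and let u₀(x) = log(Σ_{α=1}^N e^{⟨p_α, x⟩}). Let v ∈ ℝⁿ satisfy ⟨v, p_α⟩ + 1 ≥ 0 for all α. Then for all x, δ ∈ ℝⁿ, e^{-2M‖δ‖} · (⟨v, ∇u₀(x)⟩ + 1) ≤ ⟨v, ∇u₀(x + δ)⟩ + 1 ≤ e^{2M‖δ‖} · (⟨v, ∇u₀(x)⟩ + 1). -/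
/-! `⟪v, ∇u₀(x)⟫ + 1` is the average of the nonnegative numbers `⟪v, p_α⟫ + 1` with weights
`e^{⟪p_α, x⟫}`. Shifting `x` by `δ` multiplies each weight by `e^{⟪p_α, δ⟫} ∈ [e^{-M‖δ‖}, e^{M‖δ‖}]`,
so the weighted sum and the total weight each change by a factor of at most `e^{M‖δ‖}`, and the
average by at most `e^{2M‖δ‖}`. The upper bound is the lower bound at `x + δ` with shift `-δ`. -/

open scoped RealInnerProductSpace

theorem Finset.div_mul_sum_mul_div_sum_le {ι : Type*} {s : Finset ι} {a b f : ι → ℝ} {c C : ℝ}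
    (hc : 0 < c) (ha : ∀ i ∈ s, 0 ≤ a i) (hab : ∀ i ∈ s, c * a i ≤ b i)
    (hba : ∀ i ∈ s, b i ≤ C * a i) (hf : ∀ i ∈ s, 0 ≤ f i) :
    c / C * ((∑ i ∈ s, a i * f i) / ∑ i ∈ s, a i) ≤ (∑ i ∈ s, b i * f i) / ∑ i ∈ s, b i := by
  have hb : ∀ i ∈ s, 0 ≤ b i := fun i hi => (mul_nonneg hc.le (ha i hi)).trans (hab i hi)
  have hbf_nonneg : 0 ≤ ∑ i ∈ s, b i * f i :=
    Finset.sum_nonneg fun i hi => mul_nonneg (hb i hi) (hf i hi)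
  rcases (Finset.sum_nonneg ha).eq_or_lt with ha_zero | ha_pos
  · simpa [← ha_zero] using div_nonneg hbf_nonneg (Finset.sum_nonneg hb)
  have hbf : c * ∑ i ∈ s, a i * f i ≤ ∑ i ∈ s, b i * f i := by
    rw [Finset.mul_sum]
    refine Finset.sum_le_sum fun i hi => ?_
    rw [← mul_assoc]
    exact mul_le_mul_of_nonneg_right (hab i hi) (hf i hi)
  have hb_low : c * ∑ i ∈ s, a i ≤ ∑ i ∈ s, b i := by
    rw [Finset.mul_sum]; exact Finset.sum_le_sum hab
  have hb_up : ∑ i ∈ s, b i ≤ C * ∑ i ∈ s, a i := by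
    rw [Finset.mul_sum]; exact Finset.sum_le_sum hba
  calc c / C * ((∑ i ∈ s, a i * f i) / ∑ i ∈ s, a i)
      = (c * ∑ i ∈ s, a i * f i) / (C * ∑ i ∈ s, a i) := by
        rw [div_mul_div_comm]
    _ ≤ (∑ i ∈ s, b i * f i) / ∑ i ∈ s, b i :=
        div_le_div₀ hbf_nonneg hbf ((mul_pos hc ha_pos).trans_le hb_low) hb_up

section LogSumExp

variable {ι E : Type*} [Fintype ι] [NormedAddCommGroup E] [InnerProductSpace ℝ E]
  (p : ι → E)

noncomputable def logSumExp (x : E) : ℝ :=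
  Real.log (∑ α, Real.exp ⟪p α, x⟫)

theorem hasFDerivAt_logSumExp [Nonempty ι] (x : E) :
    HasFDerivAt (logSumExp p)
      ((∑ α, Real.exp ⟪p α, x⟫)⁻¹ • ∑ α, Real.exp ⟪p α, x⟫ • innerSL ℝ (p α)) x :=
  (HasFDerivAt.fun_sum fun α _ => (innerSL ℝ (p α)).hasFDerivAt.exp).log (by positivity)

theorem inner_gradient_logSumExp_add_one [CompleteSpace E] [Nonempty ι] (v x : E) :
    ⟪v, gradient (logSumExp p) x⟫ + 1
      = (∑ α, Real.exp ⟪p α, x⟫ * (⟪v, p α⟫ + 1)) / ∑ α, Real.exp ⟪p α, x⟫ := by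
  have hS : 0 < ∑ α, Real.exp ⟪p α, x⟫ := by positivity
  rw [real_inner_comm, gradient, InnerProductSpace.toDual_symm_apply,
    (hasFDerivAt_logSumExp p x).fderiv]
  simp only [smul_apply, sum_apply, innerSL_apply_apply,
    smul_eq_mul, mul_add, mul_one, Finset.sum_add_distrib, real_inner_comm (p _) v]
  field_simp

theorem abs_inner_le_mul_norm {M : ℝ} {q : E} (hq : ‖q‖ ≤ M) (δ : E) : |⟪q, δ⟫| ≤ M * ‖δ‖ :=
  (abs_real_inner_le_norm q δ).trans (mul_le_mul_of_nonneg_right hq (norm_nonneg δ))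

theorem exp_neg_mul_le_exp_inner_add {M : ℝ} {q : E} (hq : ‖q‖ ≤ M) (x δ : E) :
    Real.exp (-(M * ‖δ‖)) * Real.exp ⟪q, x⟫ ≤ Real.exp ⟪q, x + δ⟫ := by
  rw [inner_add_right, Real.exp_add, mul_comm]
  gcongr
  exact neg_le_of_abs_le (abs_inner_le_mul_norm hq δ)

theorem exp_inner_add_le_exp_mul {M : ℝ} {q : E} (hq : ‖q‖ ≤ M) (x δ : E) :
    Real.exp ⟪q, x + δ⟫ ≤ Real.exp (M * ‖δ‖) * Real.exp ⟪q, x⟫ := by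
  rw [inner_add_right, Real.exp_add, mul_comm]
  gcongr
  exact le_of_abs_le (abs_inner_le_mul_norm hq δ)

theorem exp_neg_mul_inner_gradient_logSumExp_add_one_le [CompleteSpace E] [Nonempty ι]
    {M : ℝ} (hM : ∀ α, ‖p α‖ ≤ M) {v : E} (hv : ∀ α, 0 ≤ ⟪v, p α⟫ + 1) (x δ : E) :
    Real.exp (-(2 * M * ‖δ‖)) * (⟪v, gradient (logSumExp p) x⟫ + 1)
      ≤ ⟪v, gradient (logSumExp p) (x + δ)⟫ + 1 := by
  have h2M : Real.exp (-(2 * M * ‖δ‖)) = Real.exp (-(M * ‖δ‖)) / Real.exp (M * ‖δ‖) := by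
    rw [← Real.exp_sub]; ring_nf
  rw [inner_gradient_logSumExp_add_one, inner_gradient_logSumExp_add_one, h2M]
  exact Finset.div_mul_sum_mul_div_sum_le (Real.exp_pos _) (fun α _ => (Real.exp_pos _).le)
    (fun α _ => exp_neg_mul_le_exp_inner_add (hM α) x δ)
    (fun α _ => exp_inner_add_le_exp_mul (hM α) x δ) (fun α _ => hv α)

end LogSumExp

/-- Let `p₁, …, p_N ∈ ℝⁿ`, `M = max_α ‖p_α‖`, and
`u₀(x) = log (∑_α e^{⟪p_α, x⟫})`.  Let `v ∈ ℝⁿ` satisfy `⟪v, p_α⟫ + 1 ≥ 0` for all `α`.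
Then for all `x, δ ∈ ℝⁿ`,
`e^{-2M‖δ‖} (⟪v, ∇u₀(x)⟫ + 1) ≤ ⟪v, ∇u₀(x + δ)⟫ + 1 ≤ e^{2M‖δ‖} (⟪v, ∇u₀(x)⟫ + 1)`. -/
theorem lse_gradient_pairing_comparison {n N : ℕ}
    (p : Fin N → EuclideanSpace ℝ (Fin n))
    (M : ℝ) (hM : IsGreatest (Set.range fun α => ‖p α‖) M)
    (u₀ : EuclideanSpace ℝ (Fin n) → ℝ)
    (hu₀ : ∀ x, u₀ x = Real.log (∑ α, Real.exp ⟪p α, x⟫))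
    (v : EuclideanSpace ℝ (Fin n)) (hv : ∀ α, 0 ≤ ⟪v, p α⟫ + 1)
    (x δ : EuclideanSpace ℝ (Fin n)) :
    Real.exp (-(2 * M * ‖δ‖)) * (⟪v, gradient u₀ x⟫ + 1)
        ≤ ⟪v, gradient u₀ (x + δ)⟫ + 1 ∧
    ⟪v, gradient u₀ (x + δ)⟫ + 1
        ≤ Real.exp (2 * M * ‖δ‖) * (⟪v, gradient u₀ x⟫ + 1) := by
  obtain ⟨α₀, -⟩ := hM.1
  have : Nonempty (Fin N) := ⟨α₀⟩
  have hpM : ∀ α, ‖p α‖ ≤ M := fun α => hM.2 ⟨α, rfl⟩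
  obtain rfl : u₀ = logSumExp p := funext hu₀
  refine ⟨exp_neg_mul_inner_gradient_logSumExp_add_one_le p hpM hv x δ, ?_⟩
  have h := exp_neg_mul_inner_gradient_logSumExp_add_one_le p hpM hv (x + δ) (-δ)
  rwa [add_neg_cancel_right, norm_neg, Real.exp_neg, inv_mul_le_iff₀ (Real.exp_pos _)] at h
end
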